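/- arXiv:2312.01189 — 2 statements merged into one kernel-verified Lean document; each statement's English description precedes it below -/
import Mathlib

section
/- Let f = Σ_{i=0}^{n} c_i x^{k_i} ∈ ℕ[x^{±1}] with all c_i positive integers, distinct exponents k_0 > ⋯ > k_n, and n ≥ 1 (i.e., |supp(f)| > 1). Then f is irreducible in ℕ[x^{±1}] if and only if f is monolithic and gcd(c_0, …, c_n) = 1. -/
/-!
Evaluation at `x = 1` is a semiring map `ℕ[x^{±1}] → ℕ`, so a unit has coefficient sum `1`
and is therefore a monomial `x^a`. A factor `e x^a` of `f` multiplies each coefficient of the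
cofactor by `e`, so `e` divides every `cᵢ`; hence when `gcd cᵢ = 1` monomial factors are units,
and monolithic means irreducible. Conversely `f = d · (f / d)` with `d = gcd cᵢ`, and
`f / d` has at least two terms, so it is not a unit and irreducibility forces `d = 1`.
-/

/-- The semiring of Laurent polynomials with nonnegative integer coefficients, ℕ[x^{±1}]. -/
abbrev NL : Type := AddMonoidAlgebra ℕ ℤ

/-- The monomial `c • x^k` in ℕ[x^{±1}]. -/
noncomputable def mono (k : ℤ) (c : ℕ) : NL := AddMonoidAlgebra.single k c

/-- Evaluation at 1, i.e. the sum of the coefficients. -/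
def evalOne (f : NL) : ℕ := f.coeff.sum fun _ c => c

/-- A monomial is `c x^k` with `c ≥ 1`. -/
def IsMonomial (f : NL) : Prop := ∃ (c : ℕ) (k : ℤ), 0 < c ∧ f = mono k c

/-- A nonzero `f` is monolithic if any factorization has a monomial factor. -/
def Monolithic (f : NL) : Prop :=
  f ≠ 0 ∧ ∀ g h : NL, f = g * h → IsMonomial g ∨ IsMonomial h

/-- `f` is hyper-monolithic: it has ≥ 2 terms, written with positive coefficients and
strictly decreasing exponents `k 0 > ⋯ > k n`, and either the first gap is strictly
smaller than every later gap, or the last gap is strictly smaller than every earlier gap. -/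
def HyperMonolithic (f : NL) : Prop :=
  ∃ (n : ℕ) (k : ℕ → ℤ) (c : ℕ → ℕ),
    1 ≤ n ∧ (∀ i j, i < j → j ≤ n → k j < k i) ∧ (∀ i, i ≤ n → 0 < c i) ∧
    f = ∑ i ∈ Finset.range (n + 1), mono (k i) (c i) ∧
    ((∀ i, 1 ≤ i → i + 1 ≤ n → k 0 - k 1 < k i - k (i + 1)) ∨
     (∀ j, j + 2 ≤ n → k (n - 1) - k n < k j - k (j + 1)))

open AddMonoidAlgebra Finset

noncomputable def evalOneHom : NL →+* ℕ :=
  liftNCRingHom (RingHom.id ℕ) 1 fun _ _ => Commute.all _ _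

lemma evalOneHom_apply (f : NL) : evalOneHom f = evalOne f := by
  simp [evalOneHom, liftNCRingHom, liftNC, evalOne, Finsupp.sum]

lemma evalOne_mono (a : ℤ) (e : ℕ) : evalOne (mono a e) = e := by
  rw [evalOne, mono, coeff_single, Finsupp.sum_single_index rfl]

lemma mono_mul_mono (a b : ℤ) (e d : ℕ) : mono a e * mono b d = mono (a + b) (e * d) :=
  single_mul_single ..

lemma isUnit_mono_one (a : ℤ) : IsUnit (mono a 1) :=
  .of_mul_eq_one (mono (-a) 1) <| by
    rw [mono_mul_mono, add_neg_cancel, mul_one, mono, one_def]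

lemma evalOne_eq_one_of_isUnit {u : NL} (hu : IsUnit u) : evalOne u = 1 := by
  rw [← evalOneHom_apply, ← Nat.isUnit_iff]
  exact hu.map evalOneHom

lemma eq_mono_of_evalOne_eq_one {u : NL} (hu : evalOne u = 1) : ∃ a, u = mono a 1 := by
  have hcard : Multiset.card (Finsupp.toMultiset u.coeff) = 1 := by
    rw [Finsupp.card_toMultiset]
    exact hu
  obtain ⟨a, ha⟩ := Multiset.card_eq_one.mp hcard
  refine ⟨a, coeff_injective ?_⟩
  rw [Finsupp.toMultiset_eq_iff.mp ha, Multiset.toFinsupp_singleton, mono, coeff_single]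

lemma isUnit_iff_exists_eq_mono {u : NL} : IsUnit u ↔ ∃ a, u = mono a 1 :=
  ⟨fun hu => eq_mono_of_evalOne_eq_one (evalOne_eq_one_of_isUnit hu),
    fun ⟨a, hu⟩ => hu ▸ isUnit_mono_one a⟩

lemma isUnit_mono_iff {a : ℤ} {e : ℕ} : IsUnit (mono a e) ↔ e = 1 :=
  ⟨fun hu => evalOne_mono a e ▸ evalOne_eq_one_of_isUnit hu,
    fun he => he ▸ isUnit_mono_one a⟩

lemma Irreducible.monolithic {f : NL} (hf : Irreducible f) : Monolithic f := by
  refine ⟨hf.ne_zero, fun g h hgh => (hf.isUnit_or_isUnit hgh).imp ?_ ?_⟩ <;>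
  · intro hu
    obtain ⟨a, rfl⟩ := isUnit_iff_exists_eq_mono.mp hu
    exact ⟨1, a, one_pos, rfl⟩

lemma dvd_coeff_of_eq_mono_mul {f w : NL} {a : ℤ} {e : ℕ} (h : f = mono a e * w) (b : ℤ) :
    e ∣ f.coeff b := by
  rw [h, mono, coeff_single_mul_apply]
  exact dvd_mul_right e _

section SumMono

variable {ι : Type*} {s : Finset ι} {k : ι → ℤ} {c : ι → ℕ}

lemma coeff_sum_mono (hk : Set.InjOn k s) {i : ι} (hi : i ∈ s) :
    (∑ j ∈ s, mono (k j) (c j)).coeff (k i) = c i := by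
  rw [coeff_sum, Finsupp.finsetSum_apply, sum_eq_single_of_mem i hi]
  · rw [mono, coeff_single, Finsupp.single_eq_same]
  · intro j hj hji
    rw [mono, coeff_single, Finsupp.single_eq_of_ne (hk.ne hi hj hji.symm)]

lemma evalOne_sum_mono : evalOne (∑ j ∈ s, mono (k j) (c j)) = ∑ j ∈ s, c j := by
  simp_rw [← evalOneHom_apply, map_sum, evalOneHom_apply, evalOne_mono]

lemma not_isUnit_sum_mono (hs : 1 < #s) (hc : ∀ i ∈ s, 0 < c i) :
    ¬IsUnit (∑ j ∈ s, mono (k j) (c j)) := by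
  intro hu
  have hsum : #s ≤ ∑ j ∈ s, c j := by simpa using card_nsmul_le_sum s c 1 hc
  rw [← evalOne_sum_mono, evalOne_eq_one_of_isUnit hu] at hsum
  omega

lemma sum_mono_eq_mono_mul_sum_mono_div {d : ℕ} (hd : ∀ i ∈ s, d ∣ c i) :
    ∑ j ∈ s, mono (k j) (c j) = mono 0 d * ∑ j ∈ s, mono (k j) (c j / d) := by
  rw [mul_sum]
  refine sum_congr rfl fun i hi => ?_
  rw [mono_mul_mono, zero_add, Nat.mul_div_cancel' (hd i hi)]

lemma gcd_eq_one_of_irreducible_sum_mono (hs : 1 < #s) (hc : ∀ i ∈ s, 0 < c i)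
    (hirr : Irreducible (∑ j ∈ s, mono (k j) (c j))) : s.gcd c = 1 := by
  obtain ⟨i₀, hi₀⟩ := card_pos.mp (one_pos.trans hs)
  have hd : 0 < s.gcd c := Nat.pos_of_dvd_of_pos (gcd_dvd hi₀) (hc i₀ hi₀)
  have hquot : ∀ i ∈ s, 0 < c i / s.gcd c :=
    fun i hi => Nat.div_pos (Nat.le_of_dvd (hc i hi) (gcd_dvd hi)) hd
  have hfactor : ∑ j ∈ s, mono (k j) (c j) =
      mono 0 (s.gcd c) * ∑ j ∈ s, mono (k j) (c j / s.gcd c) :=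
    sum_mono_eq_mono_mul_sum_mono_div fun i hi => gcd_dvd hi
  rcases hirr.isUnit_or_isUnit hfactor with hu | hu
  · exact isUnit_mono_iff.mp hu
  · exact absurd hu (not_isUnit_sum_mono hs hquot)

lemma isUnit_of_isMonomial_of_sum_mono_eq_mul (hk : Set.InjOn k s) (hgcd : s.gcd c = 1)
    {g w : NL} (hg : IsMonomial g) (h : ∑ j ∈ s, mono (k j) (c j) = g * w) : IsUnit g := by
  obtain ⟨e, a, -, rfl⟩ := hg
  rw [isUnit_mono_iff, ← Nat.dvd_one, ← hgcd]
  refine Finset.dvd_gcd fun i hi => ?_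
  rw [← coeff_sum_mono (c := c) hk hi]
  exact dvd_coeff_of_eq_mono_mul h (k i)

end SumMono

/-- For `f = Σ cᵢ x^{kᵢ}` with positive coefficients, strictly decreasing exponents and
`n ≥ 1`: `f` is irreducible iff `f` is monolithic and `gcd(c₀,…,cₙ) = 1`. -/
theorem stmt3 (n : ℕ) (hn : 1 ≤ n) (k : ℕ → ℤ) (c : ℕ → ℕ)
    (hk : ∀ i j, i < j → j ≤ n → k j < k i) (hc : ∀ i, i ≤ n → 0 < c i)
    (f : NL) (hf : f = ∑ i ∈ Finset.range (n + 1), mono (k i) (c i)) :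
    Irreducible f ↔ Monolithic f ∧ (Finset.range (n + 1)).gcd c = 1 := by
  subst hf
  have hcard : 1 < #(range (n + 1)) := by rw [card_range]; omega
  have hc' : ∀ i ∈ range (n + 1), 0 < c i :=
    fun i hi => hc i (Nat.lt_succ_iff.mp (mem_range.mp hi))
  have hk' : Set.InjOn k (range (n + 1)) :=
    StrictAntiOn.injOn fun i _ j hj hij =>
      hk i j hij (Nat.lt_succ_iff.mp (mem_range.mp hj))
  refine ⟨fun hirr =>
    ⟨hirr.monolithic, gcd_eq_one_of_irreducible_sum_mono hcard hc' hirr⟩, ?_⟩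
  rintro ⟨⟨-, hsplit⟩, hgcd⟩
  refine ⟨not_isUnit_sum_mono hcard hc', fun g h hgh => ?_⟩
  rcases hsplit g h hgh with hg | hh
  · exact .inl (isUnit_of_isMonomial_of_sum_mono_eq_mul hk' hgcd hg hgh)
  · rw [mul_comm] at hgh
    exact .inr (isUnit_of_isMonomial_of_sum_mono_eq_mul hk' hgcd hh hgh)
end

section
/- Let f ∈ ℕ[x^{±1}] be hyper-monolithic with the smallest gap between consecutive exponents occurring at the last position (i.e., k_{n−1} − k_n < k_j − k_{j+1} for all j ∈ {0, …, n−2}). If f = gh where neither g nor h is a monomial, then a contradiction arises; hence no nontrivial factorization exists. -/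
/-!
Over `ℕ` there is no cancellation, so the support of `g * h` is the sumset of the supports of
`g` and `h`. With `a₀`, `b₀` the smallest exponents of `g` and `h`, the smallest exponent of `f`
is `k n = a₀ + b₀`, and `k (n - 1) = a + b` with `(a, b) ≠ (a₀, b₀)`. If `a ≠ a₀`, choose
`b' ≠ b₀` in the support of `h`: then `a + b'` and `a₀ + b'` are exponents of `f`, at distance
`a - a₀ ≤ k (n - 1) - k n`, and the lower one is not `k n`; symmetrically if `b ≠ b₀`. But since
the last gap is the strictly smallest one, `k (n - 1)` and `k n` are the only exponents of `f`
that close together.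
-/

open Finset Pointwise

theorem IsLeast.add {α : Type*} [AddCommMonoid α] [Preorder α] [IsOrderedAddMonoid α]
    {s t : Set α} {a b : α} (ha : IsLeast s a) (hb : IsLeast t b) : IsLeast (s + t) (a + b) :=
  ⟨Set.add_mem_add ha.1 hb.1, by
    rintro _ ⟨x, hx, y, hy, rfl⟩
    exact add_le_add (ha.2 hx) (hb.2 hy)⟩

theorem exists_lt_add_le_of_nontrivial {α : Type*} [AddCommMonoid α] [LinearOrder α]
    [IsOrderedCancelAddMonoid α] [DecidableEq α] {A B : Finset α}
    (hA : A.Nontrivial) (hB : B.Nontrivial) {a₀ b₀ : α}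
    (ha₀ : IsLeast (A : Set α) a₀) (hb₀ : IsLeast (B : Set α) b₀)
    {s : α} (hs : s ∈ A + B) (hs₀ : s ≠ a₀ + b₀) :
    ∃ x ∈ A + B, ∃ y ∈ A + B, y ≠ a₀ + b₀ ∧ y < x ∧ x + (a₀ + b₀) ≤ s + y := by
  obtain ⟨a, ha, b, hb, rfl⟩ := mem_add.mp hs
  by_cases haa₀ : a = a₀
  · subst haa₀
    have hbb₀ : b₀ < b := (hb₀.2 hb).lt_of_ne fun h => hs₀ (by rw [h])
    obtain ⟨a', ha', ha'a⟩ := hA.exists_ne a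
    refine ⟨a' + b, add_mem_add ha' hb, a' + b₀, add_mem_add ha' hb₀.1,
      fun h => ha'a (add_right_cancel h), add_lt_add_right hbb₀ a', le_of_eq (by abel)⟩
  · have haa₀ : a₀ < a := (ha₀.2 ha).lt_of_ne' haa₀
    obtain ⟨b', hb', hb'b⟩ := hB.exists_ne b₀
    refine ⟨a + b', add_mem_add ha hb', a₀ + b', add_mem_add ha₀.1 hb',
      fun h => hb'b (add_left_cancel h), add_lt_add_left haa₀ b', ?_⟩
    calc a + b' + (a₀ + b₀) = (a + a₀ + b') + b₀ := by abel
      _ ≤ (a + a₀ + b') + b := add_le_add_right (hb₀.2 hb) _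
      _ = a + b + (a₀ + b') := by abel

theorem isLeast_image_range_succ {β : Type*} [Preorder β] [DecidableEq β] {n : ℕ} {k : ℕ → β}
    (hk : AntitoneOn k (Set.Iic n)) : IsLeast ↑((range (n + 1)).image k) (k n) := by
  refine ⟨mem_image_of_mem k (self_mem_range_succ n), fun x hx => ?_⟩
  obtain ⟨i, hi, rfl⟩ := mem_image.mp hx
  exact hk (mem_range_succ_iff.mp hi) (le_refl n) (mem_range_succ_iff.mp hi)

namespace AddMonoidAlgebra

variable {R G : Type*} [Semiring R] [NoZeroDivisors R] [Subsingleton (AddUnits R)]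

theorem support_coeff_mul [Add G] [DecidableEq G] (x y : AddMonoidAlgebra R G) :
    (x * y).coeff.support = x.coeff.support + y.coeff.support := by
  refine (support_coeff_mul_subset x y).antisymm fun m hm => ?_
  obtain ⟨a, ha, b, hb, rfl⟩ := mem_add.mp hm
  rw [Finsupp.mem_support_iff, coeff_mul, Finsupp.sum, Ne, sum_eq_zero_iff]
  intro h
  have hab := h a ha
  rw [Finsupp.sum, sum_eq_zero_iff] at hab
  simpa [Finsupp.mem_support_iff.mp ha, Finsupp.mem_support_iff.mp hb] using hab b hb

end AddMonoidAlgebra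

open AddMonoidAlgebra

theorem support_coeff_sum_mono {ι : Type*} [DecidableEq ι] (s : Finset ι) (k : ι → ℤ)
    {c : ι → ℕ} (hc : ∀ i ∈ s, c i ≠ 0) :
    (∑ i ∈ s, mono (k i) (c i)).coeff.support = s.image k := by
  induction s using Finset.induction_on with
  | empty => simp
  | insert i s hi ih =>
    rw [sum_insert hi, coeff_add, Finsupp.support_add_eq_union,
      ih fun j hj => hc j (mem_insert_of_mem hj), image_insert, insert_eq, mono, coeff_single,
      Finsupp.support_single _ (hc i (mem_insert_self i s))]

theorem support_nontrivial_of_not_isMonomial {g : NL} (hg : ¬IsMonomial g)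
    (hne : g.coeff.support.Nonempty) : g.coeff.support.Nontrivial := by
  refine hne.exists_eq_singleton_or_nontrivial.resolve_left ?_
  rintro ⟨a, ha⟩
  obtain ⟨hga, hg1⟩ := Finsupp.support_eq_singleton.mp ha
  exact hg ⟨g.coeff a, a, Nat.pos_of_ne_zero hga,
    coeff_injective (by rw [mono, coeff_single]; exact hg1)⟩

theorem eq_of_sub_le_last_gap {n : ℕ} {k : ℕ → ℤ} (hk : StrictAntiOn k (Set.Iic n))
    (hgap : ∀ j, j + 2 ≤ n → k (n - 1) - k n < k j - k (j + 1)) {i j : ℕ} (hi : i ≤ n)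
    (hj : j ≤ n) (hij : k i < k j) (hle : k j - k i ≤ k (n - 1) - k n) : i = n := by
  have hji : j < i := (hk.lt_iff_gt hi hj).mp hij
  by_contra hin
  have hgap_j := hgap j (by omega)
  have hki : k i ≤ k (j + 1) := hk.antitoneOn (show j + 1 ≤ n by omega) hi hji
  omega

/-- If the smallest gap of `f` occurs at the last position, then `f` admits no
factorization `f = g * h` in which neither factor is a monomial. -/
theorem stmt5 (n : ℕ) (hn : 1 ≤ n) (k : ℕ → ℤ) (c : ℕ → ℕ)
    (hk : ∀ i j, i < j → j ≤ n → k j < k i) (hc : ∀ i, i ≤ n → 0 < c i)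
    (hgap : ∀ j, j + 2 ≤ n → k (n - 1) - k n < k j - k (j + 1))
    (f g h : NL) (hf : f = ∑ i ∈ Finset.range (n + 1), mono (k i) (c i))
    (hfactor : f = g * h) (hg : ¬ IsMonomial g) (hh : ¬ IsMonomial h) :
    False := by
  classical
  have hk' : StrictAntiOn k (Set.Iic n) := fun i _ j hj hij => hk i j hij hj
  have hS : f.coeff.support = (range (n + 1)).image k := by
    rw [hf, support_coeff_sum_mono _ _ fun i hi => (hc i (mem_range_succ_iff.mp hi)).ne']
  have hSgh : f.coeff.support = g.coeff.support + h.coeff.support := by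
    rw [hfactor, support_coeff_mul]
  have hmem : ∀ i ≤ n, k i ∈ f.coeff.support := fun i hi =>
    hS ▸ mem_image_of_mem k (mem_range_succ_iff.mpr hi)
  have hne : (g.coeff.support + h.coeff.support).Nonempty := hSgh ▸ ⟨_, hmem n le_rfl⟩
  have hA := support_nontrivial_of_not_isMonomial hg hne.of_add_left
  have hB := support_nontrivial_of_not_isMonomial hh hne.of_add_right
  have hA₀ := isLeast_min' _ hA.nonempty
  have hB₀ := isLeast_min' _ hB.nonempty
  have hm : g.coeff.support.min' hA.nonempty + h.coeff.support.min' hB.nonempty = k n :=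
    (hA₀.add hB₀).unique (by
      rw [← Finset.coe_add, ← hSgh, hS]; exact isLeast_image_range_succ hk'.antitoneOn)
  obtain ⟨x, hx, y, hy, hym, hyx, hxy⟩ := exists_lt_add_le_of_nontrivial hA hB hA₀ hB₀
    (hSgh ▸ hmem (n - 1) (by omega)) (hm ▸ (hk (n - 1) n (by omega) le_rfl).ne')
  rw [← hSgh, hS] at hx hy
  obtain ⟨j, hj, rfl⟩ := mem_image.mp hx
  obtain ⟨i, hi, rfl⟩ := mem_image.mp hy
  rw [hm] at hym hxy
  exact hym (congrArg k (eq_of_sub_le_last_gap hk' hgap (mem_range_succ_iff.mp hi)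
    (mem_range_succ_iff.mp hj) hyx (by linarith)))
end
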